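/- arXiv:1506.04996 — 2 statements merged into one kernel-verified Lean document; each statement's English description precedes it below -/
import Mathlib

section
/- Let A be a finite-dimensional Leibniz algebra over an infinite field. If Nil(A) is a generalized Frattini ideal of A, then A is not solvable. -/
namespace Leib

variable (F : Type*) [Field F] {A : Type*} [NonUnitalNonAssocRing A]
  [Module F A] [SMulCommClass F A A] [IsScalarTower F A A]

/-- `S` is a subalgebra: a submodule closed under multiplication. -/
def IsSubalg (S : Submodule F A) : Prop := ∀ x ∈ S, ∀ y ∈ S, x * y ∈ S

/-- `S` is a (two-sided) ideal of the Leibniz algebra `A`. -/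
def IsIdeal (S : Submodule F A) : Prop := ∀ a : A, ∀ s ∈ S, a * s ∈ S ∧ s * a ∈ S

/-- The normalizer `N_A(C)` of a subspace `C` in `A`. -/
def normalizer (C : Submodule F A) : Submodule F A where
  carrier := {a | ∀ c ∈ C, a * c ∈ C ∧ c * a ∈ C}
  zero_mem' := by intro c hc; simp [C.zero_mem]
  add_mem' := by
    intro a b ha hb c hc
    exact ⟨by rw [add_mul]; exact C.add_mem (ha c hc).1 (hb c hc).1,
           by rw [mul_add]; exact C.add_mem (ha c hc).2 (hb c hc).2⟩
  smul_mem' := by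
    intro r a ha c hc
    exact ⟨by rw [smul_mul_assoc]; exact C.smul_mem r (ha c hc).1,
           by rw [mul_smul_comm]; exact C.smul_mem r (ha c hc).2⟩

/-- The span of all products `s * t` with `s ∈ S`, `t ∈ T`. -/
def mulSpan (S T : Submodule F A) : Submodule F A :=
  Submodule.span F {x | ∃ s ∈ S, ∃ t ∈ T, x = s * t}

/-- The (left-normed) lower central series of a subspace `S`:
`S, S·S, S·(S·S), …`. -/
def lcs (S : Submodule F A) : ℕ → Submodule F A
  | 0 => S
  | n + 1 => mulSpan F S (lcs S n)

/-- `S` is nilpotent. -/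
def IsNilp (S : Submodule F A) : Prop := ∃ n, lcs F S n = ⊥

/-- The derived series of a subspace `S`. -/
def derSeries (S : Submodule F A) : ℕ → Submodule F A
  | 0 => S
  | n + 1 => mulSpan F (derSeries S n) (derSeries S n)

/-- `S` is solvable. -/
def IsSolv (S : Submodule F A) : Prop := ∃ n, derSeries F S n = ⊥

/-- `C` is a Cartan subalgebra of the subalgebra `K`: a nilpotent subalgebra of `K`
that is self-normalizing in `K`. -/
def IsCartanOf (K C : Submodule F A) : Prop :=
  C ≤ K ∧ IsSubalg F C ∧ IsNilp F C ∧ normalizer F C ⊓ K = C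

/-- `H` is a generalized Frattini ideal (Cartan-subalgebra definition): `H` is proper and
whenever `A = H + N_A(C)` for `C` a Cartan subalgebra of an ideal `K` of `A`,
it follows that `A = N_A(C)`. -/
def GenFrattiniC (H : Submodule F A) : Prop :=
  H ≠ ⊤ ∧ ∀ K C : Submodule F A, IsIdeal F K → IsCartanOf F K C →
    H ⊔ normalizer F C = ⊤ → normalizer F C = ⊤

/-- `H` is a generalized Frattini ideal (nilpotency characterization): `H` is proper and
every ideal `J ⊇ H` with `J/H` nilpotent is nilpotent. -/
def GenFrattiniN (H : Submodule F A) : Prop :=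
  H ≠ ⊤ ∧ ∀ J : Submodule F A, IsIdeal F J → H ≤ J →
    (∃ n, lcs F J n ≤ H) → IsNilp F J

/-- The center `Z(A)`. -/
def center : Submodule F A where
  carrier := {z | ∀ a : A, z * a = 0 ∧ a * z = 0}
  zero_mem' := by intro a; simp
  add_mem' := by
    intro x y hx hy a
    exact ⟨by rw [add_mul, (hx a).1, (hy a).1, add_zero],
           by rw [mul_add, (hx a).2, (hy a).2, add_zero]⟩
  smul_mem' := by
    intro r x hx a
    exact ⟨by rw [smul_mul_assoc, (hx a).1, smul_zero],
           by rw [mul_smul_comm, (hx a).2, smul_zero]⟩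

/-- `M` is a maximal subalgebra of `A`. -/
def IsMaxSubalg (M : Submodule F A) : Prop :=
  IsSubalg F M ∧ M ≠ ⊤ ∧ ∀ S : Submodule F A, IsSubalg F S → M < S → S = ⊤

/-- `I` is a maximal ideal of `A`. -/
def IsMaxIdeal (I : Submodule F A) : Prop :=
  IsIdeal F I ∧ I ≠ ⊤ ∧ ∀ J : Submodule F A, IsIdeal F J → I < J → J = ⊤

/-- `K` is a primitive ideal: `Φ(A/K) = 0`, `A/K` has a unique minimal ideal, and
`dim (A/K) > 1`.  (Ideals and maximal subalgebras of `A/K` are stated via the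
correspondence with ideals and maximal subalgebras of `A` containing `K`.) -/
def IsPrimitiveIdeal (K : Submodule F A) : Prop :=
  IsIdeal F K ∧
  (∀ J : Submodule F A, IsIdeal F J → K ≤ J →
      (∀ M : Submodule F A, IsMaxSubalg F M → K ≤ M → J ≤ M) → J = K) ∧
  (∃! B : Submodule F A, IsIdeal F B ∧ K < B ∧
      ∀ B' : Submodule F A, IsIdeal F B' → K < B' → ¬ B' < B) ∧
  1 < Module.finrank F (A ⧸ K)

end Leib

/-
If `A` were solvable, descend the derived series `A = D₀ ⊇ D₁ ⊇ ⋯ ⊇ D_n = 0 ≤ Nil(A)`.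
Whenever `D_{k+1} ≤ Nil(A)`, the ideal `J = Nil(A) + D_k` satisfies `J·J ≤ Nil(A)`, so `J/Nil(A)`
is nilpotent; since `Nil(A)` is generalized Frattini, `J` itself is nilpotent, hence `J ≤ Nil(A)`
and `D_k ≤ Nil(A)`. Reaching `D₀ = A` contradicts the properness of `Nil(A)`.
-/

namespace Leib

variable {F : Type*} [Field F] {A : Type*} [NonUnitalNonAssocRing A] [Module F A]

theorem mul_mem_mulSpan {S T : Submodule F A} {s t : A} (hs : s ∈ S) (ht : t ∈ T) :
    s * t ∈ mulSpan F S T :=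
  Submodule.subset_span ⟨s, hs, t, ht, rfl⟩

theorem mulSpan_le_iff {S T I : Submodule F A} :
    mulSpan F S T ≤ I ↔ ∀ s ∈ S, ∀ t ∈ T, s * t ∈ I := by
  refine ⟨fun h s hs t ht => h (mul_mem_mulSpan hs ht), fun h => Submodule.span_le.2 ?_⟩
  rintro _ ⟨s, hs, t, ht, rfl⟩
  exact h s hs t ht

theorem IsIdeal.sup {I J : Submodule F A} (hI : IsIdeal F I) (hJ : IsIdeal F J) :
    IsIdeal F (I ⊔ J) := by
  intro a s hs
  obtain ⟨x, hx, y, hy, rfl⟩ := Submodule.mem_sup.1 hs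
  rw [mul_add, add_mul]
  exact ⟨Submodule.add_mem_sup (hI a x hx).1 (hJ a y hy).1,
    Submodule.add_mem_sup (hI a x hx).2 (hJ a y hy).2⟩

theorem mulSpan_sup_self_le {I D : Submodule F A} (hI : IsIdeal F I) (hD : mulSpan F D D ≤ I) :
    mulSpan F (I ⊔ D) (I ⊔ D) ≤ I := by
  refine mulSpan_le_iff.2 fun s hs t ht => ?_
  obtain ⟨x, hx, d, hd, rfl⟩ := Submodule.mem_sup.1 hs
  obtain ⟨y, hy, d', hd', rfl⟩ := Submodule.mem_sup.1 ht
  rw [add_mul, mul_add d]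
  exact add_mem (hI _ x hx).2 (add_mem (hI d y hy).1 (hD (mul_mem_mulSpan hd hd')))

variable [SMulCommClass F A A] [IsScalarTower F A A]

theorem IsIdeal.mulSpan_self (leib : ∀ a b c : A, a * (b * c) = a * b * c + b * (a * c))
    {D : Submodule F A} (hD : IsIdeal F D) : IsIdeal F (mulSpan F D D) := by
  intro a x hx
  constructor
  · refine (mulSpan_le_iff (I := (mulSpan F D D).comap (LinearMap.mulLeft F a))).2 ?_ hx
    intro d hd d' hd'
    change a * (d * d') ∈ mulSpan F D D
    rw [leib]
    exact add_mem (mul_mem_mulSpan (hD a d hd).1 hd') (mul_mem_mulSpan hd (hD a d' hd').1)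
  · refine (mulSpan_le_iff (I := (mulSpan F D D).comap (LinearMap.mulRight F a))).2 ?_ hx
    intro d hd d' hd'
    change d * d' * a ∈ mulSpan F D D
    rw [eq_sub_of_add_eq (leib d d' a).symm]
    exact sub_mem (mul_mem_mulSpan hd (hD a d' hd').2) (mul_mem_mulSpan hd' (hD a d hd).2)

theorem isIdeal_derSeries_top (leib : ∀ a b c : A, a * (b * c) = a * b * c + b * (a * c))
    (k : ℕ) : IsIdeal F (derSeries F (⊤ : Submodule F A) k) := by
  induction k with
  | zero => exact fun _ _ _ => ⟨Submodule.mem_top, Submodule.mem_top⟩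
  | succ k ih => exact IsIdeal.mulSpan_self leib ih

theorem derSeries_le_of_succ_le (leib : ∀ a b c : A, a * (b * c) = a * b * c + b * (a * c))
    {N : Submodule F A} (hN : IsIdeal F N)
    (hNmax : ∀ M : Submodule F A, IsIdeal F M → IsNilp F M → M ≤ N) (hGF : GenFrattiniN F N)
    {k : ℕ} (hk : derSeries F (⊤ : Submodule F A) (k + 1) ≤ N) :
    derSeries F (⊤ : Submodule F A) k ≤ N := by
  have hJ : IsIdeal F (N ⊔ derSeries F ⊤ k) := IsIdeal.sup hN (isIdeal_derSeries_top leib k)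
  have hJN : N ⊔ derSeries F ⊤ k ≤ N :=
    hNmax _ hJ (hGF.2 _ hJ le_sup_left ⟨1, mulSpan_sup_self_le hN hk⟩)
  exact le_sup_right.trans hJN

end Leib

open Leib in
theorem not_solvable_of_nil_genFrattini_general
    {F : Type*} [Field F] {A : Type*} [NonUnitalNonAssocRing A]
    [Module F A] [SMulCommClass F A A] [IsScalarTower F A A]
    (leib : ∀ a b c : A, a * (b * c) = a * b * c + b * (a * c))
    (N : Submodule F A) (hN : IsIdeal F N)
    (hNmax : ∀ M : Submodule F A, IsIdeal F M → IsNilp F M → M ≤ N)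
    (hGF : GenFrattiniN F N) :
    ¬ IsSolv F (⊤ : Submodule F A) := by
  rintro ⟨n, hn⟩
  have hdescend : ∀ k, derSeries F (⊤ : Submodule F A) k ≤ N → (⊤ : Submodule F A) ≤ N := by
    intro k
    induction k with
    | zero => exact id
    | succ k ih => exact fun hk => ih (derSeries_le_of_succ_le leib hN hNmax hGF hk)
  exact hGF.1 (top_le_iff.1 (hdescend n (hn ▸ bot_le)))

open Leib in
/-- if `Nil(A)` is generalized Frattini, then `A` is not solvable. -/
theorem not_solvable_of_nil_genFrattini
    {F : Type*} [Field F] [Infinite F] {A : Type*} [NonUnitalNonAssocRing A]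
    [Module F A] [SMulCommClass F A A] [IsScalarTower F A A] [Module.Finite F A]
    (leib : ∀ a b c : A, a * (b * c) = a * b * c + b * (a * c))
    (N : Submodule F A) (hN : IsIdeal F N) (hNnilp : IsNilp F N)
    (hNmax : ∀ M : Submodule F A, IsIdeal F M → IsNilp F M → M ≤ N)
    (hGF : GenFrattiniN F N) :
    ¬ IsSolv F (⊤ : Submodule F A) :=
  not_solvable_of_nil_genFrattini_general leib N hN hNmax hGF
end

section
/- A finite-dimensional Leibniz algebra A is nilpotent if and only if Φ(A) = A², where Φ(A) is the Frattini ideal. -/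
section FrattiniAux
set_option linter.unusedSectionVars false
set_option linter.unusedVariables false

namespace Leib

open Submodule Module

attribute [local instance 100] LieRing.ofAssociativeRing

variable {F : Type*} [Field F] {A : Type*} [NonUnitalNonAssocRing A]
  [Module F A] [SMulCommClass F A A] [IsScalarTower F A A]

theorem mem_mulSpan {S T : Submodule F A} {x y : A} (hx : x ∈ S) (hy : y ∈ T) :
    x * y ∈ mulSpan F S T :=
  Submodule.subset_span ⟨x, hx, y, hy, rfl⟩

theorem mulSpan_le {S T W : Submodule F A} (h : ∀ s ∈ S, ∀ t ∈ T, s * t ∈ W) :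
    mulSpan F S T ≤ W := by
  unfold mulSpan
  refine Submodule.span_le.mpr ?_
  rintro z ⟨s, hs, t, ht, rfl⟩
  exact h s hs t ht

theorem mulSpan_mono {S T T' : Submodule F A} (h : T ≤ T') :
    mulSpan F S T ≤ mulSpan F S T' :=
  mulSpan_le fun s hs t ht => mem_mulSpan hs (h ht)

theorem lcs_succ_def (S : Submodule F A) (n : ℕ) :
    lcs F S (n + 1) = mulSpan F S (lcs F S n) := rfl

theorem mem_lcs_succ {n : ℕ} (a : A) {x : A} (hx : x ∈ lcs F (⊤ : Submodule F A) n) :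
    a * x ∈ lcs F (⊤ : Submodule F A) (n + 1) :=
  mem_mulSpan Submodule.mem_top hx

theorem lcs_antitone : Antitone (lcs F (⊤ : Submodule F A)) := by
  apply antitone_nat_of_succ_le
  intro n
  induction n with
  | zero => exact le_top
  | succ k ih => exact mulSpan_mono ih

theorem lcs_mul (leib : ∀ a b c : A, a * (b * c) = a * b * c + b * (a * c)) :
    ∀ i j : ℕ, ∀ x ∈ lcs F (⊤ : Submodule F A) i, ∀ y ∈ lcs F (⊤ : Submodule F A) j,
      x * y ∈ lcs F (⊤ : Submodule F A) (i + j + 1) := by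
  intro i
  induction i with
  | zero =>
    intro j x _ y hy
    have h1 : x * y ∈ lcs F (⊤ : Submodule F A) (j + 1) := mem_lcs_succ x hy
    have e : j + 1 = 0 + j + 1 := by omega
    rwa [e] at h1
  | succ i ih =>
    intro j x hx y hy
    have key : lcs F (⊤ : Submodule F A) (i + 1) ≤
        Submodule.comap (LinearMap.mulRight F y) (lcs F (⊤ : Submodule F A) (i + j + 2)) := by
      rw [lcs_succ_def]
      refine mulSpan_le ?_
      intro b _ c hc
      simp only [Submodule.mem_comap, LinearMap.mulRight_apply]
      have h1 : c * y ∈ lcs F (⊤ : Submodule F A) (i + j + 1) := ih j c hc y hy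
      have h2 : b * (c * y) ∈ lcs F (⊤ : Submodule F A) (i + j + 2) := mem_lcs_succ b h1
      have h3 : b * y ∈ lcs F (⊤ : Submodule F A) (j + 1) := mem_lcs_succ b hy
      have h4 : c * (b * y) ∈ lcs F (⊤ : Submodule F A) (i + (j + 1) + 1) := ih (j + 1) c hc _ h3
      have e : i + (j + 1) + 1 = i + j + 2 := by omega
      rw [e] at h4
      have hbc : b * c * y = b * (c * y) - c * (b * y) := by
        rw [eq_sub_iff_add_eq]
        exact (leib b c y).symm
      rw [hbc]
      exact Submodule.sub_mem _ h2 h4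
    have h5 := key hx
    simp only [Submodule.mem_comap, LinearMap.mulRight_apply] at h5
    have e : i + 1 + j + 1 = i + j + 2 := by omega
    rwa [e]

theorem pow_mulLeft_mem_lcs (a : A) : ∀ (k : ℕ) (x : A),
    ((LinearMap.mulLeft F a) ^ k) x ∈ lcs F (⊤ : Submodule F A) k := by
  intro k
  induction k with
  | zero => intro x; exact Submodule.mem_top
  | succ k ih =>
    intro x
    have h1 : ((LinearMap.mulLeft F a) ^ (k + 1)) x = a * (((LinearMap.mulLeft F a) ^ k) x) := by
      rw [pow_succ', Module.End.mul_apply, LinearMap.mulLeft_apply]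
    rw [h1]
    exact mem_lcs_succ a (ih x)

theorem pow_mulLeft_mul_eq_zero
    (leib : ∀ a b c : A, a * (b * c) = a * b * c + b * (a * c)) (a : A) :
    ∀ (n p q : ℕ), p + q = n + 1 → ∀ x y : A,
      ((LinearMap.mulLeft F a) ^ p) x = 0 → ((LinearMap.mulLeft F a) ^ q) y = 0 →
      ((LinearMap.mulLeft F a) ^ n) (x * y) = 0 := by
  intro n
  induction n with
  | zero =>
    intro p q hpq x y hx hy
    rcases p with _ | p
    · simp only [pow_zero, Module.End.one_apply] at hx
      rw [pow_zero, Module.End.one_apply, hx, zero_mul]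
    · have hq : q = 0 := by omega
      subst hq
      simp only [pow_zero, Module.End.one_apply] at hy
      rw [pow_zero, Module.End.one_apply, hy, mul_zero]
  | succ n ih =>
    intro p q hpq x y hx hy
    rcases p with _ | p
    · simp only [pow_zero, Module.End.one_apply] at hx
      rw [hx, zero_mul, map_zero]
    rcases q with _ | q
    · simp only [pow_zero, Module.End.one_apply] at hy
      rw [hy, mul_zero, map_zero]
    have hx' : ((LinearMap.mulLeft F a) ^ p) (a * x) = 0 := by
      rw [pow_succ, Module.End.mul_apply, LinearMap.mulLeft_apply] at hx
      exact hx
    have hy' : ((LinearMap.mulLeft F a) ^ q) (a * y) = 0 := by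
      rw [pow_succ, Module.End.mul_apply, LinearMap.mulLeft_apply] at hy
      exact hy
    rw [pow_succ, Module.End.mul_apply, LinearMap.mulLeft_apply, leib a x y, map_add]
    rw [ih p (q + 1) (by omega) (a * x) y hx' hy, ih (p + 1) q (by omega) x (a * y) hx hy',
      add_zero]

theorem exists_maxSubalg_ge [Module.Finite F A] :
    ∀ (d : ℕ) (S : Submodule F A), finrank F A - finrank F S ≤ d →
      IsSubalg F S → S ≠ ⊤ → ∃ M, IsMaxSubalg F M ∧ S ≤ M := by
  intro d
  induction d with
  | zero =>
    intro S hle hsub hne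
    have h := Submodule.finrank_lt (K := F) hne
    exact absurd hle (by omega)
  | succ d ih =>
    intro S hle hsub hne
    by_cases hmax : ∀ S' : Submodule F A, IsSubalg F S' → S < S' → S' = ⊤
    · exact ⟨S, ⟨hsub, hne, hmax⟩, le_rfl⟩
    · push_neg at hmax
      obtain ⟨S', hS'sub, hlt, hne'⟩ := hmax
      have h1 : finrank F S < finrank F S' := Submodule.finrank_lt_finrank_of_lt hlt
      have h2 : finrank F S' ≤ finrank F A := S'.finrank_le
      obtain ⟨M, hM, hle'⟩ := ih S' (by omega) hS'sub hne'
      exact ⟨M, hM, le_trans hlt.le hle'⟩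

theorem mulLeft_nilpotent [Module.Finite F A]
    (leib : ∀ a b c : A, a * (b * c) = a * b * c + b * (a * c))
    (Hmax : ∀ M : Submodule F A, IsMaxSubalg F M → mulSpan F ⊤ (⊤ : Submodule F A) ≤ M)
    (a : A) : ∃ m : ℕ, (LinearMap.mulLeft F a) ^ m = 0 := by
  set T := LinearMap.mulLeft F a with hT
  obtain ⟨n₀, hn₀⟩ := monotone_stabilizes_iff_noetherian.mpr inferInstance T.iterateKer
  obtain ⟨n₁, hn₁⟩ := Filter.eventually_atTop.mp T.eventually_codisjoint_ker_pow_range_pow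
  set m := n₀ + n₁ + 1 with hm
  have hstab : ∀ k, m ≤ k → LinearMap.ker (T ^ m) = LinearMap.ker (T ^ k) := by
    intro k hk
    have e1 : T.iterateKer n₀ = T.iterateKer m := hn₀ m (by omega)
    have e2 : T.iterateKer n₀ = T.iterateKer k := hn₀ k (by omega)
    exact e1.symm.trans e2
  have hsubalg : IsSubalg F (LinearMap.ker (T ^ m)) := by
    intro x hx y hy
    rw [LinearMap.mem_ker] at hx hy
    rw [hstab (2 * m - 1) (by omega), LinearMap.mem_ker]
    exact pow_mulLeft_mul_eq_zero leib a (2 * m - 1) m m (by omega) x y hx hy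
  have hcod : Codisjoint (LinearMap.ker (T ^ m)) (LinearMap.range (T ^ m)) := hn₁ m (by omega)
  have hrange : LinearMap.range (T ^ m) ≤ mulSpan F ⊤ (⊤ : Submodule F A) := by
    rintro z ⟨x, rfl⟩
    have h1 : (T ^ m) x ∈ lcs F (⊤ : Submodule F A) m := pow_mulLeft_mem_lcs a m x
    have h2 : lcs F (⊤ : Submodule F A) m ≤ lcs F (⊤ : Submodule F A) 1 :=
      lcs_antitone (show 1 ≤ m by omega)
    exact h2 h1
  by_cases htop : LinearMap.ker (T ^ m) = ⊤
  · exact ⟨m, LinearMap.ker_eq_top.mp htop⟩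
  · exfalso
    obtain ⟨M, hM, hle⟩ :=
      exists_maxSubalg_ge (finrank F A) (LinearMap.ker (T ^ m)) (by omega) hsubalg htop
    have h2 : LinearMap.ker (T ^ m) ⊔ LinearMap.range (T ^ m) = ⊤ := codisjoint_iff.mp hcod
    have h1 : (⊤ : Submodule F A) ≤ M := by
      rw [← h2]
      exact sup_le hle (le_trans hrange (Hmax M hM))
    exact hM.2.1 (top_le_iff.mp h1)

theorem isNilp_of_mulLeft_nilpotent [Module.Finite F A]
    (leib : ∀ a b c : A, a * (b * c) = a * b * c + b * (a * c))
    (hnil : ∀ a : A, ∃ m : ℕ, (LinearMap.mulLeft F a) ^ m = 0) :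
    IsNilp F (⊤ : Submodule F A) := by
  classical
  let lam : A →ₗ[F] Module.End F A :=
    { toFun := fun a => LinearMap.mulLeft F a
      map_add' := fun a b => by ext z; simp [add_mul]
      map_smul' := fun r a => by ext z; simp [smul_mul_assoc]}
  let G : LieSubalgebra F (Module.End F A) :=
    { LinearMap.range lam with
      lie_mem' := by
        intro x y hx hy
        obtain ⟨c, rfl⟩ := hx
        obtain ⟨b, rfl⟩ := hy
        refine ⟨c * b, ?_⟩
        ext z
        show (c * b) * z = ⁅lam c, lam b⁆ z
        rw [Ring.lie_def, LinearMap.sub_apply, Module.End.mul_apply, Module.End.mul_apply]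
        show c * b * z = c * (b * z) - b * (c * z)
        rw [eq_sub_iff_add_eq]
        exact (leib c b z).symm }
  haveI : IsNoetherian F (Module.End F A) := inferInstance
  haveI : IsNoetherian F G :=
    isNoetherian_of_injective G.toSubmodule.subtype Subtype.coe_injective
  have hEngel : LieAlgebra.IsEngelian F G := LieAlgebra.isEngelian_of_isNoetherian
  have hnilpmod : LieModule.IsNilpotent G A := by
    apply hEngel A
    intro x
    obtain ⟨c, hc⟩ := x.property
    obtain ⟨mx, hmx⟩ := hnil c
    refine ⟨mx, ?_⟩
    have h1 : LieModule.toEnd F G A x = (x : Module.End F A) := by ext z; rfl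
    rw [h1, ← hc]
    exact hmx
  obtain ⟨k, hk⟩ := (LieModule.isNilpotent_iff F G A).mp hnilpmod
  have hle : ∀ k : ℕ,
      lcs F (⊤ : Submodule F A) k ≤ (LieModule.lowerCentralSeries F (↥G) A k : Submodule F A) := by
    intro k
    induction k with
    | zero => exact le_of_eq (by simp [lcs])
    | succ k ih =>
      rw [lcs_succ_def]
      refine mulSpan_le ?_
      intro s _ t ht
      have hs : lam s ∈ G := ⟨s, rfl⟩
      have ht' : t ∈ LieModule.lowerCentralSeries F (↥G) A k := ih ht
      have hb : ⁅(⟨lam s, hs⟩ : G), t⁆ ∈ ⁅(⊤ : LieIdeal F G), LieModule.lowerCentralSeries F (↥G) A k⁆ :=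
        LieSubmodule.lie_mem_lie (LieSubmodule.mem_top _) ht'
      rw [← LieModule.lowerCentralSeries_succ] at hb
      exact hb
  refine ⟨k, le_bot_iff.mp ?_⟩
  have h2 := hle k
  rw [hk] at h2
  simpa using h2

theorem sq_le_max_of_nilp
    (leib : ∀ a b c : A, a * (b * c) = a * b * c + b * (a * c))
    (hnilp : IsNilp F (⊤ : Submodule F A)) (M : Submodule F A) (hM : IsMaxSubalg F M) :
    mulSpan F ⊤ (⊤ : Submodule F A) ≤ M := by
  by_contra hns
  have hsup : M ⊔ mulSpan F ⊤ (⊤ : Submodule F A) = ⊤ := by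
    refine hM.2.2 _ ?_ ?_
    · intro x hx y hy
      exact Submodule.mem_sup_right (mem_mulSpan Submodule.mem_top Submodule.mem_top)
    · refine lt_of_le_of_ne le_sup_left ?_
      intro h
      exact hns (h ▸ le_sup_right)
  have claim : ∀ k : ℕ, M ⊔ lcs F (⊤ : Submodule F A) (k + 1) = ⊤ := by
    intro k
    induction k with
    | zero => exact hsup
    | succ k ih =>
      have hsq_le : mulSpan F ⊤ (⊤ : Submodule F A) ≤ M ⊔ lcs F (⊤ : Submodule F A) (k + 2) := by
        refine mulSpan_le ?_
        intro x _ y _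
        have hx : x ∈ M ⊔ lcs F (⊤ : Submodule F A) (k + 1) := by rw [ih]; trivial
        have hy : y ∈ M ⊔ lcs F (⊤ : Submodule F A) (k + 1) := by rw [ih]; trivial
        obtain ⟨mx, hmx, ux, hux, rfl⟩ := Submodule.mem_sup.mp hx
        obtain ⟨my, hmy, uy, huy, rfl⟩ := Submodule.mem_sup.mp hy
        have hexp : (mx + ux) * (my + uy) =
            mx * my + (mx * uy + (ux * my + ux * uy)) := by
          rw [add_mul, mul_add, mul_add]
          abel
        rw [hexp]
        refine Submodule.add_mem _ (Submodule.mem_sup_left (hM.1 mx hmx my hmy)) ?_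
        refine Submodule.add_mem _ (Submodule.mem_sup_right (mem_lcs_succ mx huy)) ?_
        have h1 : ux * my ∈ lcs F (⊤ : Submodule F A) (k + 1 + 0 + 1) :=
          lcs_mul leib (k + 1) 0 ux hux my Submodule.mem_top
        have h2 : ux * uy ∈ lcs F (⊤ : Submodule F A) (k + 1 + 0 + 1) :=
          lcs_mul leib (k + 1) 0 ux hux uy Submodule.mem_top
        have e : k + 1 + 0 + 1 = k + 2 := by omega
        rw [e] at h1 h2
        exact Submodule.add_mem _ (Submodule.mem_sup_right h1) (Submodule.mem_sup_right h2)
      have h6 : M ⊔ mulSpan F ⊤ (⊤ : Submodule F A) ≤ M ⊔ lcs F (⊤ : Submodule F A) (k + 2) :=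
        sup_le le_sup_left hsq_le
      rw [hsup] at h6
      exact top_le_iff.mp h6
  obtain ⟨n, hn⟩ := hnilp
  have h1 : lcs F (⊤ : Submodule F A) (n + 1) = ⊥ :=
    le_bot_iff.mp (hn ▸ lcs_antitone (Nat.le_succ n))
  have h2 := claim n
  rw [h1, sup_bot_eq] at h2
  exact hM.2.1 h2

theorem exists_max_not_mem [Module.Finite F A] {x : A}
    (hx : x ∉ mulSpan F ⊤ (⊤ : Submodule F A)) :
    ∃ M : Submodule F A, IsMaxSubalg F M ∧ x ∉ M := by
  classical
  set sq := mulSpan F ⊤ (⊤ : Submodule F A) with hsq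
  set π := sq.mkQ with hπ
  have hxb : π x ≠ 0 := by
    simpa [π, Submodule.Quotient.mk_eq_zero] using hx
  obtain ⟨C, hC⟩ := Submodule.exists_isCompl (Submodule.span F {π x})
  refine ⟨Submodule.comap π C, ⟨?_, ?_, ?_⟩, ?_⟩
  · intro u hu v hv
    have : u * v ∈ sq := mem_mulSpan Submodule.mem_top Submodule.mem_top
    have hker : u * v ∈ LinearMap.ker π := by
      rw [Submodule.ker_mkQ]; exact this
    rw [Submodule.mem_comap]
    rw [LinearMap.mem_ker] at hker
    rw [hker]
    exact C.zero_mem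
  · intro h
    have hxM : x ∈ Submodule.comap π C := h ▸ Submodule.mem_top
    have h1 : π x ∈ C := hxM
    have h2 : π x ∈ Submodule.span F {π x} := Submodule.mem_span_singleton_self _
    have h3 : π x ∈ (⊥ : Submodule F (A ⧸ sq)) := hC.inf_eq_bot ▸ Submodule.mem_inf.mpr ⟨h2, h1⟩
    exact hxb h3
  · intro S hS hlt
    obtain ⟨y, hyS, hyM⟩ := SetLike.exists_of_lt hlt
    have hsqS : sq ≤ S := by
      intro s hs
      have h1 : s ∈ Submodule.comap π C := by
        rw [Submodule.mem_comap]
        have : π s = 0 := by rwa [← LinearMap.mem_ker, Submodule.ker_mkQ]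
        rw [this]; exact C.zero_mem
      exact hlt.le h1
    set D := Submodule.map π S with hD
    have hCD : C ≤ D := by
      intro c hc
      obtain ⟨s, hsM⟩ : ∃ s, s ∈ Submodule.comap π C ∧ π s = c := by
        obtain ⟨s, hs⟩ := Submodule.mkQ_surjective sq c
        exact ⟨s, by rw [Submodule.mem_comap, hs]; exact hc, hs⟩
      exact ⟨s, hlt.le hsM.1, hsM.2⟩
    have hylt : π y ∈ D := ⟨y, hyS, rfl⟩
    have hync : π y ∉ C := fun h => hyM (Submodule.mem_comap.mpr h)
    have hCDlt : C < D := lt_of_le_of_ne hCD (fun h => hync (h ▸ hylt))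
    have hfin : finrank F (A ⧸ sq) ≤ finrank F D := by
      have e1 : finrank F (Submodule.span F {π x}) + finrank F C = finrank F (A ⧸ sq) :=
        Submodule.finrank_add_eq_of_isCompl hC
      have e2 : finrank F (Submodule.span F {π x}) = 1 := finrank_span_singleton hxb
      have e3 : finrank F C < finrank F D := Submodule.finrank_lt_finrank_of_lt hCDlt
      omega
    have hDtop : D = ⊤ := by
      apply Submodule.eq_top_of_finrank_eq
      exact le_antisymm (Submodule.finrank_le D) hfin
    have h4 : Submodule.comap π D = S := by
      rw [hD, Submodule.comap_map_eq, Submodule.ker_mkQ]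
      exact sup_eq_left.mpr hsqS
    rw [← h4, hDtop]
    exact Submodule.comap_top π
  · intro h
    have h1 : π x ∈ C := h
    have h2 : π x ∈ Submodule.span F {π x} := Submodule.mem_span_singleton_self _
    have h3 : π x ∈ (⊥ : Submodule F (A ⧸ sq)) := hC.inf_eq_bot ▸ Submodule.mem_inf.mpr ⟨h2, h1⟩
    exact hxb h3

end Leib

end FrattiniAux

open Leib in
/-- `A` is nilpotent iff `Φ(A) = A²`.  Here `P` is the Frattini ideal:
the largest ideal contained in every maximal subalgebra. -/
theorem nilpotent_iff_frattini_eq_derived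
    {F : Type*} [Field F] {A : Type*} [NonUnitalNonAssocRing A]
    [Module F A] [SMulCommClass F A A] [IsScalarTower F A A] [Module.Finite F A]
    (leib : ∀ a b c : A, a * (b * c) = a * b * c + b * (a * c))
    (P : Submodule F A) (hP : IsIdeal F P)
    (hPle : ∀ M : Submodule F A, IsMaxSubalg F M → P ≤ M)
    (hPmax : ∀ J : Submodule F A, IsIdeal F J →
      (∀ M : Submodule F A, IsMaxSubalg F M → J ≤ M) → J ≤ P) :
    IsNilp F (⊤ : Submodule F A) ↔ P = mulSpan F ⊤ (⊤ : Submodule F A) := by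
  constructor
  · intro hnilp
    apply le_antisymm
    · intro x hxP
      by_contra hx
      obtain ⟨M, hM, hxM⟩ := Leib.exists_max_not_mem hx
      exact hxM (hPle M hM hxP)
    · refine hPmax _ ?_ ?_
      · intro a s hs
        exact ⟨Leib.mem_mulSpan Submodule.mem_top Submodule.mem_top,
          Leib.mem_mulSpan Submodule.mem_top Submodule.mem_top⟩
      · intro M hM
        exact Leib.sq_le_max_of_nilp leib hnilp M hM
  · intro hPsq
    have Hmax : ∀ M : Submodule F A, IsMaxSubalg F M → mulSpan F ⊤ (⊤ : Submodule F A) ≤ M :=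
      fun M hM => hPsq ▸ hPle M hM
    exact Leib.isNilp_of_mulLeft_nilpotent leib fun a => Leib.mulLeft_nilpotent leib Hmax a
end
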